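/- arXiv:1601.03320 — 2 statements merged into one kernel-verified Lean document; each statement's English description precedes it below -/
import Mathlib

section
/- Let c > 0, let e, b : ℝ × ℝ³ → ℝ³ be C² fields, let ρ : ℝ × ℝ³ → ℝ be C¹ and j : ℝ × ℝ³ → ℝ³ be C¹. Suppose that for all (t,x): curl_x e(t,x) = −(1/c) ∂_t b(t,x) and curl_x b(t,x) = (1/c) ∂_t e(t,x) + (4π/c) j(t,x), that the continuity equation ∂_t ρ(t,x) + div_x j(t,x) = 0 holds for all (t,x), and that at time t = 0 the constraints div_x e(0,x) = 4π ρ(0,x) and div_x b(0,x) = 0 hold for all x. Then for every t ∈ ℝ and x ∈ ℝ³ one has div_x e(t,x) = 4π ρ(t,x) and div_x b(t,x) = 0. -/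
open MeasureTheory Filter Metric

noncomputable section

/-- Points of physical space `ℝ³`. -/
abbrev V3 : Type := Fin 3 → ℝ

/-- Partial derivative in the `i`-th coordinate direction. -/
def pd (i : Fin 3) (f : V3 → ℝ) (x : V3) : ℝ := fderiv ℝ f x (Pi.single i 1)

/-- Spatial divergence of a vector field. -/
def div3 (F : V3 → V3) (x : V3) : ℝ := ∑ i, pd i (fun y => F y i) x

/-- Spatial curl of a vector field. -/
def curl3 (F : V3 → V3) (x : V3) : V3 :=
  ![pd 1 (fun y => F y 2) x - pd 2 (fun y => F y 1) x,
    pd 2 (fun y => F y 0) x - pd 0 (fun y => F y 2) x,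
    pd 0 (fun y => F y 1) x - pd 1 (fun y => F y 0) x]

/-- Spatial gradient of a scalar field. -/
def grad3 (f : V3 → ℝ) (x : V3) : V3 := fun i => pd i f x

/-- Spatial Laplacian of a scalar field. -/
def lap3 (f : V3 → ℝ) (x : V3) : ℝ := ∑ i, pd i (fun y => pd i f y) x

/-- Componentwise spatial Laplacian of a vector field. -/
def vlap3 (F : V3 → V3) (x : V3) : V3 := fun k => lap3 (fun y => F y k) x

/-- Time derivative of a time-dependent vector field. -/
def dt (F : ℝ → V3 → V3) (t : ℝ) (x : V3) : V3 := fun i => deriv (fun s => F s x i) t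

/-- Second time derivative of a time-dependent vector field. -/
def dt2 (F : ℝ → V3 → V3) (t : ℝ) (x : V3) : V3 :=
  fun i => deriv (fun s => deriv (fun r => F r x i) s) t

/-!
Taking the divergence of the evolution equations and using `div curl = 0` gives
`∂ₜ div b = 0` and `∂ₜ div e = -4π div j = 4π ∂ₜ ρ`, the last step by the continuity equation.
Commuting `∂ₜ` with the spatial derivatives is where the `C²` hypotheses enter (symmetry of
second derivatives on `ℝ × ℝ³`). Hence `div b` and `div e - 4πρ` are constant in time, and they
vanish at `t = 0`.
-/

section Calculus

variable {E F : Type*} [NormedAddCommGroup E] [NormedSpace ℝ E]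
  [NormedAddCommGroup F] [NormedSpace ℝ F]

theorem fderiv_fderiv_apply {f : E → F} {x : E} (hf : DifferentiableAt ℝ (fderiv ℝ f) x)
    (v w : E) : fderiv ℝ (fun y => fderiv ℝ f y v) x w = fderiv ℝ (fderiv ℝ f) x w v := by
  rw [fderiv_clm_apply hf (differentiableAt_const v)]
  simp

theorem ContDiff.differentiable_fderiv {f : E → F} (hf : ContDiff ℝ 2 f) :
    Differentiable ℝ (fderiv ℝ f) :=
  (hf.fderiv_right (m := 1) (by norm_num)).differentiable one_ne_zero

theorem ContDiff.differentiable_fderiv_apply {f : E → F} (hf : ContDiff ℝ 2 f) (v : E) :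
    Differentiable ℝ (fun y => fderiv ℝ f y v) :=
  hf.differentiable_fderiv.clm_apply (differentiable_const v)

theorem ContDiff.fderiv_fderiv_apply_comm {f : E → F} (hf : ContDiff ℝ 2 f) (x v w : E) :
    fderiv ℝ (fun y => fderiv ℝ f y v) x w = fderiv ℝ (fun y => fderiv ℝ f y w) x v := by
  rw [fderiv_fderiv_apply (hf.differentiable_fderiv x),
    fderiv_fderiv_apply (hf.differentiable_fderiv x)]
  exact (hf.contDiffAt.isSymmSndFDerivAt (by simp)).eq w v

theorem DifferentiableAt.hasDerivAt_comp_prodMk_left {h : ℝ × E → F} {t : ℝ} {x : E}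
    (hh : DifferentiableAt ℝ h (t, x)) :
    HasDerivAt (fun s => h (s, x)) (fderiv ℝ h (t, x) (1, 0)) t :=
  hh.hasFDerivAt.comp_hasDerivAt t ((hasDerivAt_id t).prodMk (hasDerivAt_const t x))

theorem DifferentiableAt.fderiv_comp_prodMk_right_apply {h : ℝ × E → F} {t : ℝ} {x : E}
    (hh : DifferentiableAt ℝ h (t, x)) (v : E) :
    fderiv ℝ (fun y => h (t, y)) x v = fderiv ℝ h (t, x) (0, v) := by
  have : HasFDerivAt (fun y => h (t, y)) _ x :=
    hh.hasFDerivAt.comp x (hasFDerivAt_prodMk_right t x)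
  rw [this.fderiv]
  simp

theorem ContDiff.hasDerivAt_fderiv_comp_prodMk_right {h : ℝ × E → F} (hh : ContDiff ℝ 2 h)
    (t : ℝ) (x v : E) :
    HasDerivAt (fun s => fderiv ℝ (fun y => h (s, y)) x v)
      (fderiv ℝ (fun y => deriv (fun s => h (s, y)) t) x v) t := by
  have hd : Differentiable ℝ h := hh.differentiable (by norm_num)
  have hslice : (fun y => deriv (fun s => h (s, y)) t) = fun y => fderiv ℝ h (t, y) (1, 0) :=
    funext fun y => (hd (t, y)).hasDerivAt_comp_prodMk_left.deriv
  simp only [fun s => (hd (s, x)).fderiv_comp_prodMk_right_apply v, hslice,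
    (hh.differentiable_fderiv_apply (1, 0) (t, x)).fderiv_comp_prodMk_right_apply v]
  -- Schwarz: both sides are the mixed second derivative of `h` at `(t, x)`
  rw [← hh.fderiv_fderiv_apply_comm]
  exact (hh.differentiable_fderiv_apply (0, v) (t, x)).hasDerivAt_comp_prodMk_left

end Calculus

section VectorCalculus

theorem pd_comm {f : V3 → ℝ} (hf : ContDiff ℝ 2 f) (i j : Fin 3) (x : V3) :
    pd i (pd j f) x = pd j (pd i f) x :=
  hf.fderiv_fderiv_apply_comm x _ _

theorem ContDiff.differentiable_pd {f : V3 → ℝ} (hf : ContDiff ℝ 2 f) (i : Fin 3) :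
    Differentiable ℝ (pd i f) :=
  hf.differentiable_fderiv_apply _

theorem pd_sub {f g : V3 → ℝ} {x : V3} (hf : DifferentiableAt ℝ f x)
    (hg : DifferentiableAt ℝ g x) (i : Fin 3) :
    pd i (fun y => f y - g y) x = pd i f x - pd i g x := by
  simp [pd, fderiv_fun_sub hf hg]

theorem pd_const_mul (a : ℝ) (f : V3 → ℝ) (i : Fin 3) (x : V3) :
    pd i (fun y => a * f y) x = a * pd i f x := by
  simp [pd, ← smul_eq_mul, ← Pi.smul_def, fderiv_const_smul_field]

theorem div3_smul (a : ℝ) (F : V3 → V3) (x : V3) : div3 (a • F) x = a * div3 F x := by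
  simp only [div3, Pi.smul_apply, smul_eq_mul, pd_const_mul, Finset.mul_sum]

theorem div3_sub {F G : V3 → V3} {x : V3} (hF : DifferentiableAt ℝ F x)
    (hG : DifferentiableAt ℝ G x) : div3 (F - G) x = div3 F x - div3 G x := by
  simp only [div3, Pi.sub_apply, ← Finset.sum_sub_distrib]
  exact Finset.sum_congr rfl fun i _ =>
    pd_sub (differentiableAt_pi.mp hF i) (differentiableAt_pi.mp hG i) i

theorem ContDiff.differentiable_curl3 {F : V3 → V3} (hF : ContDiff ℝ 2 F) :
    Differentiable ℝ (curl3 F) := by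
  have hpd : ∀ i k, Differentiable ℝ (pd i fun y => F y k) :=
    fun i k => (contDiff_pi.mp hF k).differentiable_pd i
  refine differentiable_pi.mpr fun k => ?_
  fin_cases k <;> simpa [curl3] using (hpd _ _).fun_sub (hpd _ _)

theorem div3_curl3 {F : V3 → V3} (hF : ContDiff ℝ 2 F) (x : V3) : div3 (curl3 F) x = 0 := by
  have hpd : ∀ i k, DifferentiableAt ℝ (pd i fun y => F y k) x :=
    fun i k => (contDiff_pi.mp hF k).differentiable_pd i x
  simp only [div3, Fin.sum_univ_three, curl3, Matrix.cons_val_zero, Matrix.cons_val_one,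
    Matrix.cons_val_two, Matrix.head_cons, Matrix.tail_cons]
  rw [pd_sub (hpd 1 2) (hpd 2 1), pd_sub (hpd 2 0) (hpd 0 2), pd_sub (hpd 0 1) (hpd 1 0),
    pd_comm (contDiff_pi.mp hF 2) 0 1, pd_comm (contDiff_pi.mp hF 1) 0 2,
    pd_comm (contDiff_pi.mp hF 0) 1 2]
  ring

theorem hasDerivAt_div3 {F : ℝ → V3 → V3} (hF : ContDiff ℝ 2 fun p : ℝ × V3 => F p.1 p.2)
    (t : ℝ) (x : V3) : HasDerivAt (fun s => div3 (F s) x) (div3 (dt F t) x) t :=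
  HasDerivAt.fun_sum fun i _ =>
    (contDiff_pi.mp hF i).hasDerivAt_fderiv_comp_prodMk_right t x (Pi.single i 1)

end VectorCalculus

/-- The two constraint (divergence) Maxwell equations propagate in time:
if they hold at `t = 0` and the evolution (curl) equations together with the continuity
equation hold for all times, then they hold for all times. -/
theorem statement_0
    (c : ℝ) (hc : 0 < c)
    (e b : ℝ → V3 → V3) (ρ : ℝ → V3 → ℝ) (j : ℝ → V3 → V3)
    (he : ContDiff ℝ 2 (fun p : ℝ × V3 => e p.1 p.2))
    (hb : ContDiff ℝ 2 (fun p : ℝ × V3 => b p.1 p.2))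
    (hρ : ContDiff ℝ 1 (fun p : ℝ × V3 => ρ p.1 p.2))
    (hj : ContDiff ℝ 1 (fun p : ℝ × V3 => j p.1 p.2))
    (faraday : ∀ t x, curl3 (e t) x = -(1/c) • dt b t x)
    (ampere : ∀ t x, curl3 (b t) x = (1/c) • dt e t x + ((4 * Real.pi)/c) • j t x)
    (continuity : ∀ t x, deriv (fun s => ρ s x) t + div3 (j t) x = 0)
    (gaussE0 : ∀ x, div3 (e 0) x = 4 * Real.pi * ρ 0 x)
    (gaussB0 : ∀ x, div3 (b 0) x = 0) :
    ∀ t x, div3 (e t) x = 4 * Real.pi * ρ t x ∧ div3 (b t) x = 0 := by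
  have hslice : ∀ {n : ℕ} {F : ℝ → V3 → V3}, ContDiff ℝ n (fun p : ℝ × V3 => F p.1 p.2) →
      ∀ t, ContDiff ℝ n (F t) :=
    fun hF t => hF.comp (contDiff_prodMk_right t)
  have dt_b : ∀ t, dt b t = (-c) • curl3 (e t) := fun t => funext fun x => by
    rw [Pi.smul_apply, faraday, smul_smul, neg_mul_neg, mul_one_div_cancel hc.ne', one_smul]
  have dt_e : ∀ t, dt e t = c • curl3 (b t) - (4 * Real.pi) • j t := fun t => funext fun x => by
    rw [Pi.sub_apply, Pi.smul_apply, Pi.smul_apply, ampere, smul_add, smul_smul, smul_smul,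
      mul_one_div_cancel hc.ne', mul_div_cancel₀ _ hc.ne', one_smul, add_sub_cancel_right]
  intro t x
  have hB : ∀ s, HasDerivAt (fun r => div3 (b r) x) 0 s := fun s => by
    have h := hasDerivAt_div3 hb s x
    rwa [dt_b, div3_smul, div3_curl3 (hslice he s), mul_zero] at h
  have hE : ∀ s, HasDerivAt (fun r => div3 (e r) x - 4 * Real.pi * ρ r x) 0 s := fun s => by
    have hρs : HasDerivAt (fun r => ρ r x) (deriv (fun r => ρ r x) s) s :=
      ((hρ.comp (contDiff_prodMk_left x)).differentiable one_ne_zero s).hasDerivAt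
    have hdiv : div3 (dt e s) x = 4 * Real.pi * deriv (fun r => ρ r x) s := by
      rw [dt_e, div3_sub (((hslice hb s).differentiable_curl3 x).const_smul c)
        (((hslice hj s).differentiable one_ne_zero x).const_smul _),
        div3_smul, div3_smul, div3_curl3 (hslice hb s)]
      linear_combination (-4 * Real.pi) * continuity s x
    have h := (hasDerivAt_div3 he s x).fun_sub (hρs.const_mul (4 * Real.pi))
    rwa [hdiv, sub_self] at h
  constructor
  · have := is_const_of_deriv_eq_zero (fun s => (hE s).differentiableAt) (fun s => (hE s).deriv) t 0
    simp only [gaussE0, sub_self] at this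
    exact sub_eq_zero.mp this
  · rw [is_const_of_deriv_eq_zero (fun s => (hB s).differentiableAt) (fun s => (hB s).deriv) t 0,
      gaussB0]
end
end

section
/- Let c > 0, d > z, let ξ = (ξ₁, ξ₂, d) ∈ ℝ³, let η ∈ ℝ³, and let f ∈ C_c(ℝ) satisfy f(t + d/c) = 0 for all t ≥ 0. Let E : ℝ × ℝ³ → ℝ³ be such that E(t,ξ) = f(t + d/c) η for all t ≤ 0 and t ↦ E(t,ξ) is square integrable on (0,∞). Define the reflected wave at the detector point ξ by E^z_j(t,ξ) = ( f(t + d/c) − f(t + d/c + 2(z − d)/c) ) η_j for j = 1,2,3, the intensity I_j(z,ξ) = ∫_0^∞ |E_j(t,ξ) + E^z_j(t,ξ)|² dt, and the combined measurement Ĩ_j(z,ξ) = (1/2) ( I_j(z,ξ) − ∫_0^∞ |E_j(t,ξ)|² dt − ∫_0^∞ |E^z_j(t,ξ)|² dt ). Then for each j: Ĩ_j(z,ξ) = −η_j ∫_{−∞}^∞ ( E_j(t,ξ) − f(t + d/c) η_j ) f(t + (2z − d)/c) dt. -/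
/-! Expanding the square, `Ĩ_j` is the cross term `∫₀^∞ E_j E^z_j`. For `t > 0` the incident
pulse has passed, so `E^z_j(t) = -f(t + (2z - d)/c) η_j`; for `t ≤ 0` the scattered part
`E_j - f(t + d/c) η_j` vanishes, so the integral over `ℝ` is the integral over `(0, ∞)`. -/

open MeasureTheory Filter

noncomputable section

theorem HasCompactSupport.comp_add_right {G M : Type*} [TopologicalSpace G] [AddGroup G]
    [ContinuousAdd G] [Zero M] {f : G → M} (hf : HasCompactSupport f) (a : G) :
    HasCompactSupport fun x => f (x + a) :=
  hf.comp_homeomorph (Homeomorph.addRight a)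

theorem MeasureTheory.integral_add_sq {α : Type*} [MeasurableSpace α] {μ : Measure α}
    {f g : α → ℝ} (hf : MemLp f 2 μ) (hg : MemLp g 2 μ) :
    ∫ x, (f x + g x) ^ 2 ∂μ = ∫ x, f x ^ 2 ∂μ + ∫ x, g x ^ 2 ∂μ + 2 * ∫ x, f x * g x ∂μ := by
  have hfg : Integrable (fun x => f x * g x) μ := hf.integrable_mul hg
  have hexpand : (fun x => (f x + g x) ^ 2) = fun x => f x ^ 2 + 2 * (f x * g x) + g x ^ 2 := by
    funext x
    ring
  have hsum : Integrable (fun x => f x ^ 2 + 2 * (f x * g x)) μ :=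
    hf.integrable_sq.add (hfg.const_mul 2)
  rw [hexpand, integral_add hsum hg.integrable_sq,
    integral_add hf.integrable_sq (hfg.const_mul 2), integral_const_mul]
  ring

theorem statement_12_general
    (c : ℝ) (d z : ℝ)
    (ξ : V3) (η : V3)
    (f : ℝ → ℝ) (hf : Continuous f) (hfc : HasCompactSupport f)
    (hf0 : ∀ t ≥ (0:ℝ), f (t + d / c) = 0)
    (E : ℝ → V3 → V3)
    (hEpast : ∀ t ≤ (0:ℝ), E t ξ = f (t + d / c) • η)
    (hEL2 : MemLp (fun t => E t ξ) 2 (volume.restrict (Set.Ioi 0)))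
    (Ez : Fin 3 → ℝ → ℝ)
    (hEz : ∀ j t, Ez j t = (f (t + d / c) - f (t + d / c + 2 * (z - d) / c)) * η j)
    (I : Fin 3 → ℝ)
    (hI : ∀ j, I j = ∫ t in Set.Ioi (0:ℝ), (E t ξ j + Ez j t)^2)
    (It : Fin 3 → ℝ)
    (hIt : ∀ j, It j = (1/2) * (I j - (∫ t in Set.Ioi (0:ℝ), (E t ξ j)^2)
      - ∫ t in Set.Ioi (0:ℝ), (Ez j t)^2)) :
    ∀ j, It j = -η j * ∫ t, (E t ξ j - f (t + d / c) * η j) * f (t + (2 * z - d) / c) := by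
  intro j
  have hEz_eq : Ez j = fun t => (f (t + d / c) - f (t + (2 * z - d) / c)) * η j := by
    funext t
    rw [hEz, add_assoc, ← add_div]
    ring_nf
  have hEz_L2 : MemLp (Ez j) 2 (volume.restrict (Set.Ioi 0)) := by
    rw [hEz_eq]
    exact ((by fun_prop : Continuous _).memLp_of_hasCompactSupport
      ((hfc.comp_add_right _).sub (hfc.comp_add_right _)).mul_right).restrict _
  have hE_L2 : MemLp (fun t => E t ξ j) 2 (volume.restrict (Set.Ioi 0)) :=
    (ContinuousLinearMap.proj (R := ℝ) (φ := fun _ : Fin 3 => ℝ) j).comp_memLp' hEL2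
  have hcross : It j = ∫ t in Set.Ioi (0:ℝ), E t ξ j * Ez j t := by
    rw [hIt, hI, integral_add_sq hE_L2 hEz_L2]
    ring
  have hintegral_eq_Ioi :
      ∫ t, (E t ξ j - f (t + d / c) * η j) * f (t + (2 * z - d) / c)
        = ∫ t in Set.Ioi (0:ℝ), (E t ξ j - f (t + d / c) * η j) * f (t + (2 * z - d) / c) := by
    refine (setIntegral_eq_integral_of_forall_compl_eq_zero fun t ht => ?_).symm
    rw [hEpast t (not_lt.mp ht), Pi.smul_apply, smul_eq_mul, sub_self, zero_mul]
  rw [hcross, hintegral_eq_Ioi, ← integral_const_mul]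
  refine setIntegral_congr_fun measurableSet_Ioi fun t ht => ?_
  simp only [hEz_eq, hf0 t (le_of_lt ht)]
  ring

/-- The combined OCT measurement at a detector point equals the
correlation of the back-scattered field with the reflected reference wave. -/
theorem statement_12
    (c : ℝ) (hc : 0 < c) (d z : ℝ) (hzd : z < d)
    (ξ : V3) (hξ : ξ 2 = d) (η : V3)
    (f : ℝ → ℝ) (hf : Continuous f) (hfc : HasCompactSupport f)
    (hf0 : ∀ t ≥ (0:ℝ), f (t + d / c) = 0)
    (E : ℝ → V3 → V3)
    (hEpast : ∀ t ≤ (0:ℝ), E t ξ = f (t + d / c) • η)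
    (hEL2 : MemLp (fun t => E t ξ) 2 (volume.restrict (Set.Ioi 0)))
    (Ez : Fin 3 → ℝ → ℝ)
    (hEz : ∀ j t, Ez j t = (f (t + d / c) - f (t + d / c + 2 * (z - d) / c)) * η j)
    (I : Fin 3 → ℝ)
    (hI : ∀ j, I j = ∫ t in Set.Ioi (0:ℝ), (E t ξ j + Ez j t)^2)
    (It : Fin 3 → ℝ)
    (hIt : ∀ j, It j = (1/2) * (I j - (∫ t in Set.Ioi (0:ℝ), (E t ξ j)^2)
      - ∫ t in Set.Ioi (0:ℝ), (Ez j t)^2)) :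
    ∀ j, It j = -η j * ∫ t, (E t ξ j - f (t + d / c) * η j) * f (t + (2 * z - d) / c) :=
  statement_12_general c d z ξ η f hf hfc hf0 E hEpast hEL2 Ez hEz I hI It hIt
end
end
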